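/- arXiv:2505.21671 — 3 statements merged into one kernel-verified Lean document; each statement's English description precedes it below -/
import Mathlib

section
/- For every node X of the rooted tree T and every label b ∈ Σ (with b = ∅ when X is the root), the function φ_{X,b} is well-defined by the recursion and is a non-decreasing piecewise linear function on the interval [0, M], where M = r̄/(1−β). -/
open Finset

noncomputable section

/-- `f` is piecewise linear on `[a,b]`: there are finitely many breakpoints
`a = t 0 ≤ t 1 ≤ … ≤ t p = b` such that on each open subinterval `(t i, t (i+1))` the
function `f` is affine. -/
def PiecewiseLinearOn (f : ℝ → ℝ) (a b : ℝ) : Prop :=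
  ∃ (p : ℕ) (t : Fin (p + 1) → ℝ), Monotone t ∧ t 0 = a ∧ t (Fin.last p) = b ∧
    ∀ i : Fin p, ∃ c d : ℝ, ∀ x ∈ Set.Ioo (t i.castSucc) (t i.succ), f x = c * x + d

variable {V L : Type*}

/-- The children of `X` in the forest described by the parent map `par`. -/
def children [Fintype V] [DecidableEq V] (par : V → Option V) (X : V) : Finset V :=
  Finset.univ.filter (fun Y => par Y = some X)

/-- The conditional probability `P(X = v ∣ Pa(X) = b)` of node `X` having label `v` given
that its parent has label `b`, under the joint label distribution `P`. -/
def condPa [Fintype V] [Fintype L] [DecidableEq V] [DecidableEq L]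
    (P : (V → L) → ℝ) (par : V → Option V) (X : V) (b v : L) : ℝ :=
  (∑ x ∈ Finset.univ.filter (fun x : V → L => x X = v ∧ x ((par X).getD X) = b), P x) /
    ∑ x ∈ Finset.univ.filter (fun x : V → L => x ((par X).getD X) = b), P x

/-- The marginal probability `P(X = v)` under the joint label distribution `P`. -/
def margP [Fintype V] [Fintype L] [DecidableEq V] [DecidableEq L]
    (P : (V → L) → ℝ) (X : V) (v : L) : ℝ :=
  ∑ x ∈ Finset.univ.filter (fun x : V → L => x X = v), P x

/-- `Φ_{S,v}(m)`: for `S = ∅` it is `m`, and for a nonempty set `S` of nodes it is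
`M − ∫_m^M ∏_{Y ∈ S} φ′_{Y,v}(k) dk`. -/
def PhiCh (φ : V → Option L → ℝ → ℝ) (S : Finset V) (v : L) (M m : ℝ) : ℝ :=
  if S.Nonempty then M - ∫ k in m..M, ∏ Y ∈ S, deriv (φ Y (some v)) k else m

/-- `φ` satisfies the Gittins recursion: for every non-root `X`, parent label `b` and
`m ∈ [0,M]`,
`φ_{X,b}(m) = max { m, Σ_v P(X=v ∣ Pa(X)=b)·[ r(X,v) + β·Φ_{Ch(X),v}(m) ] }`,
and for every root `X` and `m ∈ [0,M]`,
`φ_{X,∅}(m) = max { m, Σ_v P(X=v)·[ r(X,v) + β·Φ_{Ch(X),v}(m) ] }`. -/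
def GittinsRec [Fintype V] [Fintype L] [DecidableEq V] [DecidableEq L]
    (par : V → Option V) (P : (V → L) → ℝ) (r : V → L → ℝ) (β M : ℝ)
    (φ : V → Option L → ℝ → ℝ) : Prop :=
  (∀ X p, par X = some p → ∀ b : L, ∀ m ∈ Set.Icc (0 : ℝ) M,
    φ X (some b) m =
      max m (∑ v : L, condPa P par X b v *
        (r X v + β * PhiCh φ (children par X) v M m))) ∧
  (∀ X, par X = none → ∀ m ∈ Set.Icc (0 : ℝ) M,
    φ X none m =
      max m (∑ v : L, margP P X v *
        (r X v + β * PhiCh φ (children par X) v M m)))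

/-- `P` is Markov with respect to the forest given by `par`: it factorizes into root
marginals `ρ` and parent-child transition kernels `κ` along the forest. -/
def MarkovForest [Fintype V] [DecidableEq V] (par : V → Option V)
    (P : (V → L) → ℝ) : Prop :=
  ∃ (ρ : V → L → ℝ) (κ : V → L → L → ℝ),
    (∀ X v, 0 ≤ ρ X v) ∧ (∀ Y b v, 0 ≤ κ Y b v) ∧
    ∀ x : V → L,
      P x = (∏ X ∈ Finset.univ.filter (fun X => par X = none), ρ X (x X)) *
        ∏ Y ∈ Finset.univ.filter (fun Y => par Y ≠ none), κ Y (x ((par Y).getD Y)) (x Y)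



/-! ### Auxiliary development -/

section AuxNice

open Filter Topology MeasureTheory Set

/-- The inductive invariant: `f` is nondecreasing and `1`-Lipschitz-above on `[0,M]`,
and off a finite set it is locally affine with slope `h x ∈ [0,1]`, where `h` is
measurable and locally constant off the finite set. -/
def Nice (M : ℝ) (f : ℝ → ℝ) : Prop :=
  MonotoneOn f (Set.Icc 0 M) ∧
  (∀ x ∈ Set.Icc (0:ℝ) M, ∀ y ∈ Set.Icc (0:ℝ) M, x ≤ y → f y - f x ≤ y - x) ∧
  ∃ (s : Finset ℝ) (h : ℝ → ℝ), Measurable h ∧ (∀ x, 0 ≤ h x ∧ h x ≤ 1) ∧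
    ∀ x, x ∈ Set.Ioo (0:ℝ) M → x ∉ s →
      (∀ᶠ y in 𝓝 x, h y = h x) ∧ (∀ᶠ y in 𝓝 x, f y = h x * y + (f x - h x * x))

lemma nice_id {M : ℝ} : Nice M (fun m => m) := by
  refine ⟨fun a _ b _ hab => hab, fun x _ y _ _ => le_rfl, ∅, fun _ => 1, measurable_const,
    fun x => ⟨zero_le_one, le_rfl⟩, fun x _ _ => ⟨Eventually.of_forall fun _ => rfl,
      Eventually.of_forall fun y => by ring⟩⟩

lemma nice_hasDerivAt {f h : ℝ → ℝ} {x : ℝ}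
    (hx : ∀ᶠ y in 𝓝 x, f y = h x * y + (f x - h x * x)) :
    HasDerivAt f (h x) x := by
  have h1 : HasDerivAt (fun y => h x * y + (f x - h x * x)) (h x) x := by
    simpa using ((hasDerivAt_id x).const_mul (h x)).add_const (f x - h x * x)
  exact h1.congr_of_eventuallyEq hx

lemma bounded_intervalIntegrable {h : ℝ → ℝ} (hm : Measurable h)
    (hb : ∀ x, 0 ≤ h x ∧ h x ≤ 1) (a b : ℝ) :
    IntervalIntegrable h MeasureTheory.volume a b := by
  rw [intervalIntegrable_iff]
  apply MeasureTheory.Measure.integrableOn_of_bounded (M := 1)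
  · rw [Set.uIoc]
    exact (measure_Ioc_lt_top).ne
  · exact hm.aestronglyMeasurable
  · refine MeasureTheory.ae_of_all _ fun x => ?_
    rw [Real.norm_eq_abs, abs_le]
    exact ⟨by linarith [(hb x).1], (hb x).2⟩


lemma nice_integral {M : ℝ} {ι : Type*} (S : Finset ι)
    (f : ι → ℝ → ℝ) (hf : ∀ Y, Nice M (f Y)) :
    Nice M (fun m => M - ∫ k in m..M, ∏ Y ∈ S, deriv (f Y) k) := by
  classical
  choose s h hmeas hbnd hloc using fun Y => (hf Y).2.2
  set hP : ℝ → ℝ := fun k => ∏ Y ∈ S, h Y k with hPdef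
  have hPmeas : Measurable hP := Finset.measurable_prod _ fun Y _ => hmeas Y
  have hPbnd : ∀ x, 0 ≤ hP x ∧ hP x ≤ 1 := fun x =>
    ⟨Finset.prod_nonneg fun Y _ => (hbnd Y x).1,
     Finset.prod_le_one (fun Y _ => (hbnd Y x).1) (fun Y _ => (hbnd Y x).2)⟩
  have hPint : ∀ a b : ℝ, IntervalIntegrable hP MeasureTheory.volume a b :=
    bounded_intervalIntegrable hPmeas hPbnd
  set G : ℝ → ℝ := fun m => M - ∫ k in m..M, ∏ Y ∈ S, deriv (f Y) k with hGdef
  have hcong : ∀ y ∈ Set.Icc (0:ℝ) M,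
      (∫ k in y..M, ∏ Y ∈ S, deriv (f Y) k) = ∫ k in y..M, hP k := by
    intro y hy
    apply intervalIntegral.integral_congr_ae
    have hnull : MeasureTheory.volume ((↑(S.biUnion s) ∪ {M}) : Set ℝ) = 0 :=
      (((S.biUnion s).finite_toSet).union (Set.finite_singleton M)).measure_zero _
    filter_upwards [MeasureTheory.measure_eq_zero_iff_ae_notMem.mp hnull] with t ht hmem
    rw [Set.uIoc_of_le hy.2] at hmem
    have htM : t ≠ M := fun hc => ht (Or.inr hc)
    have htIoo : t ∈ Set.Ioo (0:ℝ) M :=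
      ⟨lt_of_le_of_lt hy.1 hmem.1, lt_of_le_of_ne hmem.2 htM⟩
    refine Finset.prod_congr rfl fun Y hY => ?_
    have hts : t ∉ s Y := fun hc => ht (Or.inl (Finset.mem_coe.mpr
      (Finset.mem_biUnion.mpr ⟨Y, hY, hc⟩)))
    exact (nice_hasDerivAt (hloc Y t htIoo hts).2).deriv
  have hincr : ∀ x ∈ Set.Icc (0:ℝ) M, ∀ y ∈ Set.Icc (0:ℝ) M,
      G y - G x = ∫ k in x..y, hP k := by
    intro x hx y hy
    have h1 := hcong x hx
    have h2 := hcong y hy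
    have h3 : (∫ k in x..y, hP k) + ∫ k in y..M, hP k = ∫ k in x..M, hP k :=
      intervalIntegral.integral_add_adjacent_intervals (hPint x y) (hPint y M)
    simp only [hGdef, h1, h2]
    linarith
  refine ⟨?_, ?_, S.biUnion s, hP, hPmeas, hPbnd, ?_⟩
  · intro x hx y hy hxy
    have := hincr x hx y hy
    have h0 : (0:ℝ) ≤ ∫ k in x..y, hP k :=
      intervalIntegral.integral_nonneg hxy fun u _ => (hPbnd u).1
    linarith
  · intro x hx y hy hxy
    have h1 := hincr x hx y hy
    have h2 : (∫ k in x..y, hP k) ≤ ∫ _ in x..y, (1:ℝ) :=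
      intervalIntegral.integral_mono_on hxy (hPint x y) intervalIntegrable_const
        fun t _ => (hPbnd t).2
    rw [intervalIntegral.integral_const, smul_eq_mul, mul_one] at h2
    linarith
  · intro x hxIoo hxs
    have hYs : ∀ Y ∈ S, x ∉ s Y := fun Y hY hc => hxs (Finset.mem_biUnion.mpr ⟨Y, hY, hc⟩)
    have hev : ∀ᶠ y in 𝓝 x, (∀ Y, Y ∈ S → h Y y = h Y x) ∧ y ∈ Set.Ioo (0:ℝ) M := by
      refine Filter.Eventually.and ?_ ?_
      · rw [Filter.eventually_all_finset]
        intro Y hY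
        exact (hloc Y x hxIoo (hYs Y hY)).1
      · exact Filter.eventually_of_mem (isOpen_Ioo.mem_nhds hxIoo) fun y hy => hy
    obtain ⟨ε, hε, hball⟩ := Metric.eventually_nhds_iff_ball.mp hev
    have hballconst : ∀ y ∈ Metric.ball x ε, hP y = hP x := by
      intro y hy
      exact Finset.prod_congr rfl fun Y hY => (hball y hy).1 Y hY
    constructor
    · filter_upwards [Metric.ball_mem_nhds x hε] with y hy
      exact hballconst y hy
    · filter_upwards [Metric.ball_mem_nhds x hε] with y hy
      have hyIoo := (hball y hy).2
      have key : G y - G x = ∫ k in x..y, hP k :=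
        hincr x (Set.Ioo_subset_Icc_self hxIoo) y (Set.Ioo_subset_Icc_self hyIoo)
      have hsub : Set.uIcc x y ⊆ Metric.ball x ε :=
        (convex_ball x ε).ordConnected.uIcc_subset (Metric.mem_ball_self hε) hy
      have hconst : (∫ k in x..y, hP k) = hP x * (y - x) := by
        rw [intervalIntegral.integral_congr (g := fun _ => hP x)
          (fun t ht => hballconst t (hsub ht)), intervalIntegral.integral_const,
          smul_eq_mul]
        ring
      rw [hconst] at key
      show G y = hP x * y + (G x - hP x * x)
      linarith

lemma nice_max {M β : ℝ} (hM : 0 ≤ M) (hβ0 : 0 ≤ β) (hβ1 : β < 1)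
    {ι : Type*} [Fintype ι] (q rr : ι → ℝ) (hq0 : ∀ v, 0 ≤ q v) (hq1 : ∑ v, q v ≤ 1)
    (G : ι → ℝ → ℝ) (hG : ∀ v, Nice M (G v))
    (f : ℝ → ℝ) (hf : ∀ m ∈ Set.Icc (0:ℝ) M, f m = max m (∑ v, q v * (rr v + β * G v m))) :
    Nice M f := by
  classical
  set F : ℝ → ℝ := fun m => ∑ v, q v * (rr v + β * G v m) with hFdef
  have hFdiff : ∀ x y : ℝ, F y - F x = ∑ v, q v * β * (G v y - G v x) := by
    intro x y
    simp only [hFdef]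
    rw [← Finset.sum_sub_distrib]
    exact Finset.sum_congr rfl fun v _ => by ring
  have hFmono : ∀ x ∈ Set.Icc (0:ℝ) M, ∀ y ∈ Set.Icc (0:ℝ) M, x ≤ y → F x ≤ F y := by
    intro x hx y hy hxy
    have h1 : (0:ℝ) ≤ ∑ v, q v * β * (G v y - G v x) := by
      apply Finset.sum_nonneg
      intro v _
      have h1 := (hG v).1 hx hy hxy
      exact mul_nonneg (mul_nonneg (hq0 v) hβ0) (by linarith)
    have := hFdiff x y
    linarith
  have hFlip : ∀ x ∈ Set.Icc (0:ℝ) M, ∀ y ∈ Set.Icc (0:ℝ) M, x ≤ y →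
      F y - F x ≤ β * (y - x) := by
    intro x hx y hy hxy
    rw [hFdiff x y]
    have h1 : ∑ v, q v * β * (G v y - G v x) ≤ ∑ v, q v * (β * (y - x)) := by
      apply Finset.sum_le_sum
      intro v _
      have hl := (hG v).2.1 x hx y hy hxy
      have h2 : β * (G v y - G v x) ≤ β * (y - x) := mul_le_mul_of_nonneg_left hl hβ0
      have h3 := mul_le_mul_of_nonneg_left h2 (hq0 v)
      nlinarith [h3]
    have h2 : ∑ v, q v * (β * (y - x)) = (∑ v, q v) * (β * (y - x)) :=
      (Finset.sum_mul _ _ _).symm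
    have h3 : (∑ v, q v) * (β * (y - x)) ≤ 1 * (β * (y - x)) := by
      apply mul_le_mul_of_nonneg_right hq1
      have : (0:ℝ) ≤ y - x := by linarith
      positivity
    linarith
  have hfmono : MonotoneOn f (Set.Icc 0 M) := by
    intro x hx y hy hxy
    rw [hf x hx, hf y hy]
    exact max_le_max hxy (hFmono x hx y hy hxy)
  have hflip : ∀ x ∈ Set.Icc (0:ℝ) M, ∀ y ∈ Set.Icc (0:ℝ) M, x ≤ y → f y - f x ≤ y - x := by
    intro x hx y hy hxy
    rw [hf x hx, hf y hy]
    refine le_trans (max_sub_max_le_max _ _ _ _) (max_le le_rfl ?_)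
    have := hFlip x hx y hy hxy
    nlinarith
  choose s h hmeas hbnd hloc using fun v => (hG v).2.2
  set SS : Set ℝ := {x | x ∈ Set.Icc (0:ℝ) M ∧ x ≤ F x} with hSSdef
  have hbdd : BddAbove (insert (0:ℝ) SS) := by
    refine ⟨M, ?_⟩
    rintro z (rfl | ⟨hz1, _⟩)
    · exact hM
    · exact hz1.2
  set mstar : ℝ := sSup (insert (0:ℝ) SS) with hmsdef
  have hne : (insert (0:ℝ) SS).Nonempty := Set.insert_nonempty _ _
  have hm0 : (0:ℝ) ≤ mstar := le_csSup hbdd (Set.mem_insert _ _)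
  set hfun : ℝ → ℝ := fun x => if x < mstar then β * ∑ v, q v * h v x else 1 with hfundef
  have hsumh : ∀ x : ℝ, 0 ≤ ∑ v, q v * h v x ∧ ∑ v, q v * h v x ≤ 1 := by
    intro x
    constructor
    · exact Finset.sum_nonneg fun v _ => mul_nonneg (hq0 v) (hbnd v x).1
    · calc ∑ v, q v * h v x ≤ ∑ v, q v := by
            apply Finset.sum_le_sum
            intro v _
            have := (hbnd v x).2
            have := (hbnd v x).1
            have := hq0 v
            nlinarith
        _ ≤ 1 := hq1
  refine ⟨hfmono, hflip, (Finset.univ.biUnion s) ∪ {mstar}, hfun, ?_, ?_, ?_⟩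
  · apply Measurable.ite (measurableSet_lt measurable_id measurable_const)
    · exact (Finset.measurable_sum _ fun v _ => (hmeas v).const_mul (q v)).const_mul β
    · exact measurable_const
  · intro x
    simp only [hfundef]
    split_ifs with hx
    · obtain ⟨ha, hb⟩ := hsumh x
      exact ⟨mul_nonneg hβ0 ha, by nlinarith⟩
    · exact ⟨zero_le_one, le_rfl⟩
  · intro x hxIoo hxs
    have hxIcc : x ∈ Set.Icc (0:ℝ) M := Set.Ioo_subset_Icc_self hxIoo
    rw [Finset.mem_union] at hxs
    push_neg at hxs
    have hxs1 : ∀ v, x ∉ s v := fun v hc =>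
      hxs.1 (Finset.mem_biUnion.mpr ⟨v, Finset.mem_univ v, hc⟩)
    have hxne : x ≠ mstar := fun hc => hxs.2 (by rw [hc]; exact Finset.mem_singleton_self _)
    set cF : ℝ := β * ∑ v, q v * h v x with hcFdef
    have hevF : ∀ᶠ y in 𝓝 x, F y = F x + cF * (y - x) := by
      have hall : ∀ᶠ y in 𝓝 x, ∀ v : ι, G v y = h v x * y + (G v x - h v x * x) :=
        Filter.eventually_all.mpr fun v => (hloc v x hxIoo (hxs1 v)).2
      filter_upwards [hall] with y hy
      have h1 : F y - F x = ∑ v, q v * β * (G v y - G v x) := hFdiff x y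
      have h2 : ∑ v, q v * β * (G v y - G v x) = ∑ v, (q v * h v x) * (β * (y - x)) := by
        apply Finset.sum_congr rfl
        intro v _
        rw [hy v]
        ring
      rw [h2, ← Finset.sum_mul] at h1
      have h3 : (∑ v, q v * h v x) * (β * (y - x)) = cF * (y - x) := by
        rw [hcFdef]; ring
      linarith
    rcases lt_or_gt_of_ne hxne with hlt | hgt
    · -- x < mstar : f = F near x
      obtain ⟨a, ha, hxa⟩ := exists_lt_of_lt_csSup hne hlt
      have haSS : a ∈ SS := by
        rcases ha with rfl | ha
        · exact absurd hxa (not_lt.mpr hxIoo.1.le)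
        · exact ha
      have hFx : x < F x := by
        have h1 := hFlip x hxIcc a haSS.1 hxa.le
        have h2 : β * (a - x) < a - x := by nlinarith
        have h3 := haSS.2
        linarith
      have hpos : ∀ᶠ y in 𝓝 x, 0 < F x + cF * (y - x) - y := by
        have hcont : ContinuousAt (fun y => F x + cF * (y - x) - y) x := by fun_prop
        have h0 : (0:ℝ) < F x + cF * (x - x) - x := by simp; linarith
        exact hcont.eventually (eventually_gt_nhds h0)
      have hloc1 : ∀ᶠ y in 𝓝 x, hfun y = hfun x := by
        have hall : ∀ᶠ y in 𝓝 x, ∀ v : ι, h v y = h v x :=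
          Filter.eventually_all.mpr fun v => (hloc v x hxIoo (hxs1 v)).1
        filter_upwards [hall, eventually_lt_nhds hlt] with y hy hy2
        simp only [hfundef, if_pos hy2, if_pos hlt]
        congr 1
        exact Finset.sum_congr rfl fun v _ => by rw [hy v]
      refine ⟨hloc1, ?_⟩
      have hfx : f x = F x := by
        rw [hf x hxIcc]; exact max_eq_right hFx.le
      filter_upwards [hevF, hpos,
        Filter.eventually_of_mem (isOpen_Ioo.mem_nhds hxIoo) fun y hy => hy] with y h1 h2 h3
      have hFy : y < F y := by rw [h1]; linarith
      rw [hf y (Set.Ioo_subset_Icc_self h3), max_eq_right hFy.le, h1]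
      simp only [hfundef, if_pos hlt, hfx]
      rw [hcFdef]
      ring
    · -- mstar < x : f = id near x
      have hFx : F x < x := by
        by_contra hc
        push_neg at hc
        have : x ∈ SS := ⟨hxIcc, hc⟩
        have := le_csSup hbdd (Set.mem_insert_of_mem _ this)
        linarith
      have hneg : ∀ᶠ y in 𝓝 x, F x + cF * (y - x) - y < 0 := by
        have hcont : ContinuousAt (fun y => F x + cF * (y - x) - y) x := by fun_prop
        have h0 : F x + cF * (x - x) - x < 0 := by simp; linarith
        exact hcont.eventually (eventually_lt_nhds h0)
      have hloc1 : ∀ᶠ y in 𝓝 x, hfun y = hfun x := by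
        filter_upwards [eventually_gt_nhds hgt] with y hy
        simp only [hfundef, if_neg (not_lt.mpr hy.le), if_neg (not_lt.mpr hgt.le)]
      refine ⟨hloc1, ?_⟩
      have hfx : f x = x := by
        rw [hf x hxIcc]; exact max_eq_left hFx.le
      filter_upwards [hevF, hneg,
        Filter.eventually_of_mem (isOpen_Ioo.mem_nhds hxIoo) fun y hy => hy] with y h1 h2 h3
      have hFy : F y ≤ y := by rw [h1]; linarith
      rw [hf y (Set.Ioo_subset_Icc_self h3), max_eq_left hFy]
      simp only [hfundef, if_neg (not_lt.mpr hgt.le), hfx]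
      ring

lemma nice_to_PL {M : ℝ} (hM : 0 ≤ M) {f : ℝ → ℝ} (hf : Nice M f) :
    PiecewiseLinearOn f 0 M := by
  classical
  obtain ⟨-, -, s, h, _hmeas, _hbnd, hloc⟩ := hf
  set s' : Finset ℝ := insert 0 (insert M (s.filter (fun x => 0 < x ∧ x < M))) with hs'
  have h0 : (0:ℝ) ∈ s' := Finset.mem_insert_self _ _
  have hMmem : M ∈ s' := Finset.mem_insert_of_mem (Finset.mem_insert_self _ _)
  have hsub : ∀ x ∈ s', 0 ≤ x ∧ x ≤ M := by
    intro x hx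
    simp only [hs', Finset.mem_insert, Finset.mem_filter] at hx
    rcases hx with rfl | rfl | ⟨_, hx1, hx2⟩
    · exact ⟨le_rfl, hM⟩
    · exact ⟨hM, le_rfl⟩
    · exact ⟨hx1.le, hx2.le⟩
  have hpos : 0 < s'.card := Finset.card_pos.mpr ⟨0, h0⟩
  set p : ℕ := s'.card - 1 with hp
  have hcard : s'.card = p + 1 := (Nat.succ_pred_eq_of_pos hpos).symm
  set t : Fin (p + 1) → ℝ := fun i => s'.orderEmbOfFin hcard i with ht
  have htmono : Monotone t := (s'.orderEmbOfFin hcard).monotone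
  have htstrict : StrictMono t := (s'.orderEmbOfFin hcard).strictMono
  have htmem : ∀ i, t i ∈ s' := fun i => Finset.orderEmbOfFin_mem _ _ _
  have ht0 : t 0 = 0 := by
    have h1 : t 0 = s'.min' ⟨0, h0⟩ := by
      have := Finset.orderEmbOfFin_zero hcard (Nat.succ_pos p)
      simpa [ht] using this
    rw [h1]
    refine le_antisymm (Finset.min'_le _ 0 h0) ?_
    exact Finset.le_min' _ _ _ fun y hy => (hsub y hy).1
  have htlast : t (Fin.last p) = M := by
    have h1 : t (Fin.last p) = s'.max' ⟨0, h0⟩ := by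
      have := Finset.orderEmbOfFin_last hcard (Nat.succ_pos p)
      simpa [ht, Fin.last] using this
    rw [h1]
    refine le_antisymm ?_ (Finset.le_max' _ M hMmem)
    exact Finset.max'_le _ _ _ fun y hy => (hsub y hy).2
  refine ⟨p, t, htmono, ht0, htlast, ?_⟩
  intro i
  by_cases hne : t i.castSucc < t i.succ
  swap
  · exact ⟨0, 0, fun x hx => absurd hx (by rw [Set.Ioo_eq_empty hne]; exact Set.notMem_empty x)⟩
  set a : ℝ := t i.castSucc with ha
  set b : ℝ := t i.succ with hb
  have hIoo_sub : Set.Ioo a b ⊆ Set.Ioo 0 M := by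
    intro x hx
    have h1 : (0:ℝ) ≤ a := by rw [← ht0]; exact htmono (Fin.zero_le _)
    have h2 : b ≤ M := by rw [← htlast]; exact htmono (Fin.le_last _)
    exact ⟨lt_of_le_of_lt h1 hx.1, lt_of_lt_of_le hx.2 h2⟩
  have hnotin : ∀ x ∈ Set.Ioo a b, x ∉ s := by
    intro x hx hxs
    have hxIoo := hIoo_sub hx
    have hxmem : x ∈ s' := by
      refine Finset.mem_insert_of_mem (Finset.mem_insert_of_mem ?_)
      exact Finset.mem_filter.mpr ⟨hxs, hxIoo.1, hxIoo.2⟩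
    obtain ⟨j, hj⟩ : ∃ j, t j = x := by
      have : x ∈ Set.range (s'.orderEmbOfFin hcard) := by
        rw [Finset.range_orderEmbOfFin]; exact hxmem
      obtain ⟨j, hj⟩ := this
      exact ⟨j, hj⟩
    rcases le_or_gt j i.castSucc with hle | hlt
    · have : t j ≤ a := htmono hle
      rw [hj] at this
      exact absurd hx.1 (not_lt.mpr this)
    · have hsucc : i.succ ≤ j := Fin.castSucc_lt_iff_succ_le.mp hlt
      have : b ≤ t j := htmono hsucc
      rw [hj] at this
      exact absurd hx.2 (not_lt.mpr this)
  set g : ℝ → ℝ × ℝ := fun x => (h x, f x - h x * x) with hg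
  have hgloc : ∀ x ∈ Set.Ioo a b, ∀ᶠ y in 𝓝 x, g y = g x := by
    intro x hx
    obtain ⟨h1, h2⟩ := hloc x (hIoo_sub hx) (hnotin x hx)
    filter_upwards [h1, h2] with y hy1 hy2
    simp only [hg, Prod.mk.injEq]
    refine ⟨hy1, ?_⟩
    rw [hy2, hy1]
    ring
  have hmid : (a + b) / 2 ∈ Set.Ioo a b := ⟨by linarith, by linarith⟩
  have hconst : ∀ x ∈ Set.Ioo a b, g x = g ((a + b) / 2) := by
    intro x hx
    haveI : PreconnectedSpace (Set.Ioo a b) := Subtype.preconnectedSpace isPreconnected_Ioo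
    set g' : Set.Ioo a b → ℝ × ℝ := fun z => g z with hg'
    have hlc : IsLocallyConstant g' := by
      rw [IsLocallyConstant.iff_eventually_eq]
      intro z
      exact continuousAt_subtype_val.eventually (hgloc z z.2)
    exact hlc.apply_eq_of_preconnectedSpace ⟨x, hx⟩ ⟨(a + b) / 2, hmid⟩
  refine ⟨h ((a + b) / 2), f ((a + b) / 2) - h ((a + b) / 2) * ((a + b) / 2), ?_⟩
  intro x hx
  have hgx := hconst x hx
  have h1 : h x = h ((a + b) / 2) := congrArg Prod.fst hgx
  have h2 : f x - h x * x = f ((a + b) / 2) - h ((a + b) / 2) * ((a + b) / 2) :=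
    congrArg Prod.snd hgx
  rw [← h1] at h2 ⊢
  linarith

end AuxNice

section Aux2

lemma PhiCh_congr (φ₁ φ₂ : V → Option L → ℝ → ℝ) (S : Finset V) (v : L) (M m : ℝ)
    (h : ∀ Y ∈ S, φ₁ Y (some v) = φ₂ Y (some v)) :
    PhiCh φ₁ S v M m = PhiCh φ₂ S v M m := by
  have : (fun k => ∏ Y ∈ S, deriv (φ₁ Y (some v)) k)
      = fun k => ∏ Y ∈ S, deriv (φ₂ Y (some v)) k :=
    funext fun k => Finset.prod_congr rfl fun Y hY => by rw [h Y hY]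
  simp only [PhiCh, this]

lemma condPa_nonneg [Fintype V] [Fintype L] [DecidableEq V] [DecidableEq L]
    (P : (V → L) → ℝ) (hP0 : ∀ x, 0 ≤ P x) (par : V → Option V) (X : V) (b v : L) :
    0 ≤ condPa P par X b v :=
  div_nonneg (Finset.sum_nonneg fun x _ => hP0 x) (Finset.sum_nonneg fun x _ => hP0 x)

lemma condPa_sum_le_one [Fintype V] [Fintype L] [DecidableEq V] [DecidableEq L]
    (P : (V → L) → ℝ) (hP0 : ∀ x, 0 ≤ P x) (par : V → Option V) (X : V) (b : L) :
    ∑ v : L, condPa P par X b v ≤ 1 := by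
  classical
  unfold condPa
  rw [← Finset.sum_div]
  set pa := (par X).getD X with hpa
  set den := ∑ x ∈ Finset.univ.filter (fun x : V → L => x pa = b), P x with hden
  have hnum : ∑ v : L, ∑ x ∈ Finset.univ.filter (fun x : V → L => x X = v ∧ x pa = b), P x
      = den := by
    have hfib : ∀ v : L, Finset.univ.filter (fun x : V → L => x X = v ∧ x pa = b)
        = (Finset.univ.filter (fun x : V → L => x pa = b)).filter (fun x => x X = v) := by
      intro v
      rw [Finset.filter_filter]
      apply Finset.filter_congr
      intro x _
      simp [and_comm]
    calc ∑ v : L, ∑ x ∈ Finset.univ.filter (fun x : V → L => x X = v ∧ x pa = b), P x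
        = ∑ v : L, ∑ x ∈ (Finset.univ.filter (fun x : V → L => x pa = b)).filter
            (fun x => x X = v), P x := by
          exact Finset.sum_congr rfl fun v _ => by rw [hfib v]
      _ = den := Finset.sum_fiberwise_of_maps_to (fun x _ => Finset.mem_univ _) P
  rw [hnum]
  rcases eq_or_ne den 0 with hd | hd
  · rw [hd, div_zero]; exact zero_le_one
  · rw [div_self hd]

lemma margP_sum_eq_one [Fintype V] [Fintype L] [DecidableEq V] [DecidableEq L]
    (P : (V → L) → ℝ) (hP1 : ∑ x : V → L, P x = 1) (X : V) :
    ∑ v : L, margP P X v = 1 := by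
  classical
  unfold margP
  rw [Finset.sum_fiberwise_of_maps_to (fun x _ => Finset.mem_univ _) P]
  exact hP1

lemma margP_nonneg [Fintype V] [Fintype L] [DecidableEq V] [DecidableEq L]
    (P : (V → L) → ℝ) (hP0 : ∀ x, 0 ≤ P x) (X : V) (v : L) : 0 ≤ margP P X v :=
  Finset.sum_nonneg fun x _ => hP0 x

end Aux2

noncomputable def phiStar [Fintype V] [DecidableEq V] [Fintype L] [DecidableEq L]
    (par : V → Option V) (dep : V → ℕ) (w : V → Option L → L → ℝ) (r : V → L → ℝ)
    (β M : ℝ) (X : V) (b : Option L) (m : ℝ) : ℝ :=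
  max m (∑ v : L, w X b v * (r X v + β *
    PhiCh (fun Y ob => if _h : dep X < dep Y then
        (fun k => phiStar par dep w r β M Y ob k) else (fun k => k))
      (children par X) v M m))
termination_by Finset.univ.sup dep - dep X
decreasing_by
  have hY : dep Y ≤ Finset.univ.sup dep := Finset.le_sup (Finset.mem_univ Y)
  omega

lemma phiStar_spec [Fintype V] [DecidableEq V] [Fintype L] [DecidableEq L]
    (par : V → Option V) (dep : V → ℕ) (w : V → Option L → L → ℝ) (r : V → L → ℝ)
    (β M : ℝ) (hdep : ∀ X Y : V, par Y = some X → dep X < dep Y) (X : V) (b : Option L)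
    (m : ℝ) :
    phiStar par dep w r β M X b m =
      max m (∑ v : L, w X b v * (r X v + β *
        PhiCh (phiStar par dep w r β M) (children par X) v M m)) := by
  rw [phiStar]
  congr 1
  refine Finset.sum_congr rfl fun v _ => ?_
  rw [PhiCh_congr _ (phiStar par dep w r β M) (children par X) v M m
    (fun Y hY => by rw [dif_pos (hdep X Y (Finset.mem_filter.mp hY).2)])]


lemma nice_PhiCh {V L : Type*} (φ : V → Option L → ℝ → ℝ) (S : Finset V) (v : L) {M : ℝ}
    (h : ∀ Y ∈ S, Nice M (φ Y (some v))) :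
    Nice M (fun m => PhiCh φ S v M m) := by
  classical
  by_cases hS : S.Nonempty
  · have hk : ∀ k : ℝ, ∏ Y ∈ S, deriv (φ Y (some v)) k
        = ∏ Y ∈ S, deriv ((fun Y => if hY : Y ∈ S then φ Y (some v) else fun x => x) Y) k :=
      fun k => Finset.prod_congr rfl fun Y hY => by simp only [dif_pos hY]
    have hfun : (fun m => PhiCh φ S v M m)
        = fun m => M - ∫ k in m..M, ∏ Y ∈ S, deriv
            ((fun Y => if hY : Y ∈ S then φ Y (some v) else fun x => x) Y) k := by
      funext m
      rw [PhiCh, if_pos hS]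
      simp only [hk]
    rw [hfun]
    refine nice_integral S _ (fun Y => ?_)
    by_cases hY : Y ∈ S
    · simp only [dif_pos hY]; exact h Y hY
    · simp only [dif_neg hY]; exact nice_id
  · have hfun : (fun m => PhiCh φ S v M m) = fun m => m := by
      funext m; rw [PhiCh, if_neg hS]
    rw [hfun]; exact nice_id


/--
For every node `X` of the rooted tree `T` and every label `b ∈ Σ`
(with `b = ∅` when `X` is the root), the function `φ_{X,b}` is well-defined by the
recursion (a function satisfying the recursion exists, and any function satisfying the
recursion has the stated properties) and is a non-decreasing piecewise linear function
on `[0, M]`, where `M = r̄/(1−β)`.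
-/
theorem phi_welldefined_monotone_piecewise_linear
    {V L : Type*} [Fintype V] [DecidableEq V] [Fintype L] [DecidableEq L]
    [Nonempty V] [Nonempty L]
    (par : V → Option V) (dep : V → ℕ)
    (hdep : ∀ X Y : V, par Y = some X → dep X < dep Y)
    (root : V) (hroot : ∀ X : V, par X = none ↔ X = root)
    (P : (V → L) → ℝ) (hP0 : ∀ x, 0 ≤ P x) (hP1 : ∑ x : V → L, P x = 1)
    (hMarkov : MarkovForest par P)
    (r : V → L → ℝ) (rbar : ℝ) (hr : ∀ X v, |r X v| ≤ rbar)
    (β : ℝ) (hβ0 : 0 < β) (hβ1 : β < 1)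
    (M : ℝ) (hM : M = rbar / (1 - β)) :
    (∃ φ : V → Option L → ℝ → ℝ, GittinsRec par P r β M φ) ∧
    (∀ φ : V → Option L → ℝ → ℝ, GittinsRec par P r β M φ →
      (∀ X p, par X = some p → ∀ b : L,
        MonotoneOn (φ X (some b)) (Set.Icc 0 M) ∧
          PiecewiseLinearOn (φ X (some b)) 0 M) ∧
      (∀ X, par X = none →
        MonotoneOn (φ X none) (Set.Icc 0 M) ∧ PiecewiseLinearOn (φ X none) 0 M)) := by
  classical
  have h1β : 0 < 1 - β := by linarith
  have hrbar : 0 ≤ rbar :=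
    le_trans (abs_nonneg _) (hr (Classical.arbitrary V) (Classical.arbitrary L))
  have hM0 : 0 ≤ M := hM ▸ div_nonneg hrbar h1β.le
  set w : V → Option L → L → ℝ := fun X ob v => match ob with
    | none => margP P X v
    | some b => condPa P par X b v with hw
  constructor
  · refine ⟨phiStar par dep w r β M, ?_, ?_⟩
    · intro X p hp b m _hm
      exact phiStar_spec par dep w r β M hdep X (some b) m
    · intro X _hX m _hm
      exact phiStar_spec par dep w r β M hdep X none m
  · intro φ hrec
    have key : ∀ n : ℕ, ∀ X : V, Finset.univ.sup dep - dep X ≤ n →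
        (∀ p, par X = some p → ∀ b : L, Nice M (φ X (some b))) ∧
        (par X = none → Nice M (φ X none)) := by
      intro n
      induction n using Nat.strong_induction_on with
      | _ n IH =>
        intro X hX
        have hch : ∀ Y ∈ children par X, ∀ v : L, Nice M (φ Y (some v)) := by
          intro Y hY v
          have hpar : par Y = some X := (Finset.mem_filter.mp hY).2
          have h1 : dep X < dep Y := hdep X Y hpar
          have h2 : dep Y ≤ Finset.univ.sup dep := Finset.le_sup (Finset.mem_univ Y)
          have h3 : Finset.univ.sup dep - dep Y < n := by omega
          exact (IH _ h3 Y le_rfl).1 X hpar v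
        have hGnice : ∀ v : L, Nice M (fun m => PhiCh φ (children par X) v M m) :=
          fun v => nice_PhiCh φ (children par X) v (fun Y hY => hch Y hY v)
        constructor
        · intro p hp b
          exact nice_max hM0 hβ0.le hβ1 (condPa P par X b) (r X)
            (fun v => condPa_nonneg P hP0 par X b v)
            (condPa_sum_le_one P hP0 par X b) _ hGnice _
            (fun m hm => hrec.1 X p hp b m hm)
        · intro hnone
          exact nice_max hM0 hβ0.le hβ1 (margP P X) (r X)
            (fun v => margP_nonneg P hP0 X v)
            (le_of_eq (margP_sum_eq_one P hP1 X)) _ hGnice _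
            (fun m hm => hrec.2 X hnone m hm)
    refine ⟨fun X p hp b => ?_, fun X hn => ?_⟩
    · have hn := (key _ X le_rfl).1 p hp b
      exact ⟨hn.1, nice_to_PL hM0 hn⟩
    · have hn2 := (key _ X le_rfl).2 hn
      exact ⟨hn2.1, nice_to_PL hM0 hn2⟩
end
end

section
/- Let M = (S, A, P̂, R̂, β) and M′ = (S, A, P, R, β) be two finite MDPs sharing the same state space S, action sets A(s), and discount factor β ∈ (0,1). Suppose that for all s ∈ S and a ∈ A(s): |R̂(s,a) − R(s,a)| ≤ ε_R, Σ_{s′∈S} |P̂(s′|s,a) − P(s′|s,a)| ≤ ε_P, and |R(s,a)| ≤ R_max. Then the optimal Q-functions satisfy ‖Q*_M − Q*_{M′}‖_∞ ≤ ε_R/(1−β) + β·R_max·ε_P/(1−β)². -/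
open Finset

/-- The Bellman optimality operator of a finite MDP with state space `S`, action sets
`Act s` (nonempty finite), transition probabilities `P s a s'`, rewards `R s a`, and
discount factor `β`:  `(T Q)(s,a) = R(s,a) + β Σ_{s'} P(s'|s,a) max_{a' ∈ A(s')} Q(s',a')`. -/
noncomputable def bellman {S A : Type*} [Fintype S]
    (Act : S → Finset A) (hAct : ∀ s, (Act s).Nonempty)
    (P : S → A → S → ℝ) (R : S → A → ℝ) (β : ℝ) (Q : S → A → ℝ) : S → A → ℝ :=
  fun s a => R s a + β * ∑ s' : S, P s a s' * (Act s').sup' (hAct s') (fun a' => Q s' a')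

/-- The supremum norm `‖Q‖_∞ = max_{s ∈ S, a ∈ A(s)} |Q(s,a)|` over state-action pairs. -/
noncomputable def supNorm {S A : Type*} [Fintype S] [Nonempty S]
    (Act : S → Finset A) (hAct : ∀ s, (Act s).Nonempty) (Q : S → A → ℝ) : ℝ :=
  Finset.univ.sup' Finset.univ_nonempty (fun s => (Act s).sup' (hAct s) (fun a => |Q s a|))

lemma abs_sup'_sub_sup'_le' {A : Type*} {t : Finset A} (h : t.Nonempty) (f g : A → ℝ)
    {c : ℝ} (hc : ∀ a ∈ t, |f a - g a| ≤ c) :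
    |t.sup' h f - t.sup' h g| ≤ c := by
  rw [abs_sub_le_iff]
  constructor
  · rw [sub_le_iff_le_add]
    apply Finset.sup'_le
    intro a ha
    have := hc a ha
    have h2 : g a ≤ t.sup' h g := Finset.le_sup' g ha
    have := abs_le.mp this
    linarith
  · rw [sub_le_iff_le_add]
    apply Finset.sup'_le
    intro a ha
    have := hc a ha
    have h2 : f a ≤ t.sup' h f := Finset.le_sup' f ha
    have := abs_le.mp this
    linarith

lemma abs_sup'_le {A : Type*} {t : Finset A} (h : t.Nonempty) (f : A → ℝ)
    {c : ℝ} (hc : ∀ a ∈ t, |f a| ≤ c) : |t.sup' h f| ≤ c := by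
  obtain ⟨a0, ha0⟩ := id h
  rw [abs_le]
  constructor
  · have := (abs_le.mp (hc a0 ha0)).1
    have h2 : f a0 ≤ t.sup' h f := Finset.le_sup' f ha0
    linarith
  · exact Finset.sup'_le _ _ fun a ha => (abs_le.mp (hc a ha)).2

/--
Let `M = (S, A, P̂, R̂, β)` and `M' = (S, A, P, R, β)` be two finite MDPs
sharing the same state space, action sets and discount factor `β ∈ (0,1)`.  Suppose that
for all `s ∈ S`, `a ∈ A(s)`: `|R̂(s,a) − R(s,a)| ≤ ε_R`,
`Σ_{s'} |P̂(s'|s,a) − P(s'|s,a)| ≤ ε_P`, and `|R(s,a)| ≤ R_max`.  Then the optimal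
Q-functions (the fixed points of the respective Bellman optimality operators) satisfy
`‖Q*_M − Q*_{M'}‖_∞ ≤ ε_R/(1−β) + β·R_max·ε_P/(1−β)²`.
-/
theorem optimal_Q_gap {S A : Type*} [Fintype S] [Nonempty S]
    (Act : S → Finset A) (hAct : ∀ s, (Act s).Nonempty)
    (Phat P : S → A → S → ℝ) (Rhat R : S → A → ℝ) (β : ℝ)
    (hβ0 : 0 < β) (hβ1 : β < 1)
    (hPhat0 : ∀ s a, a ∈ Act s → ∀ s', 0 ≤ Phat s a s')
    (hPhat1 : ∀ s a, a ∈ Act s → ∑ s' : S, Phat s a s' = 1)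
    (hP0 : ∀ s a, a ∈ Act s → ∀ s', 0 ≤ P s a s')
    (hP1 : ∀ s a, a ∈ Act s → ∑ s' : S, P s a s' = 1)
    (εR εP Rmax : ℝ)
    (hR : ∀ s a, a ∈ Act s → |Rhat s a - R s a| ≤ εR)
    (hPgap : ∀ s a, a ∈ Act s → ∑ s' : S, |Phat s a s' - P s a s'| ≤ εP)
    (hRmax : ∀ s a, a ∈ Act s → |R s a| ≤ Rmax)
    (QM QM' : S → A → ℝ)
    (hQM : bellman Act hAct Phat Rhat β QM = QM)
    (hQM' : bellman Act hAct P R β QM' = QM') :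
    supNorm Act hAct (fun s a => QM s a - QM' s a) ≤
      εR / (1 - β) + β * Rmax * εP / (1 - β) ^ 2 := by
  set D := supNorm Act hAct (fun s a => QM s a - QM' s a) with hD
  set N := supNorm Act hAct QM' with hN
  have hβ1' : (0:ℝ) < 1 - β := by linarith
  -- pointwise bounds from the sup norms
  have hDle : ∀ s a, a ∈ Act s → |QM s a - QM' s a| ≤ D := by
    intro s a ha
    exact le_trans (Finset.le_sup' (fun a => |QM s a - QM' s a|) ha)
      (Finset.le_sup' (fun s => (Act s).sup' (hAct s) (fun a => |QM s a - QM' s a|))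
        (Finset.mem_univ s))
  have hNle : ∀ s a, a ∈ Act s → |QM' s a| ≤ N := by
    intro s a ha
    exact le_trans (Finset.le_sup' (fun a => |QM' s a|) ha)
      (Finset.le_sup' (fun s => (Act s).sup' (hAct s) (fun a => |QM' s a|))
        (Finset.mem_univ s))
  -- value function bounds
  have hVgap : ∀ s', |(Act s').sup' (hAct s') (fun a' => QM s' a') -
      (Act s').sup' (hAct s') (fun a' => QM' s' a')| ≤ D :=
    fun s' => abs_sup'_sub_sup'_le' _ _ _ (fun a ha => hDle s' a ha)
  have hVN : ∀ s', |(Act s').sup' (hAct s') (fun a' => QM' s' a')| ≤ N :=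
    fun s' => abs_sup'_le _ _ (fun a ha => hNle s' a ha)
  -- N ≤ Rmax / (1 - β)
  have hNbound : ∀ s a, a ∈ Act s → |QM' s a| ≤ Rmax + β * N := by
    intro s a ha
    rw [← hQM']
    unfold bellman
    calc |R s a + β * ∑ s' : S, P s a s' * (Act s').sup' (hAct s') (fun a' => QM' s' a')|
        ≤ |R s a| + β * |∑ s' : S, P s a s' * (Act s').sup' (hAct s') (fun a' => QM' s' a')| := by
          simpa [abs_mul, abs_of_pos hβ0] using
            abs_add_le (R s a) (β * ∑ s' : S, P s a s' * (Act s').sup' (hAct s') (fun a' => QM' s' a'))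
      _ ≤ Rmax + β * N := by
          gcongr
          · exact hRmax s a ha
          · calc |∑ s' : S, P s a s' * (Act s').sup' (hAct s') (fun a' => QM' s' a')|
                ≤ ∑ s' : S, |P s a s' * (Act s').sup' (hAct s') (fun a' => QM' s' a')| :=
                  Finset.abs_sum_le_sum_abs _ _
              _ ≤ ∑ s' : S, P s a s' * N := by
                  apply Finset.sum_le_sum
                  intro s' _
                  rw [abs_mul, abs_of_nonneg (hP0 s a ha s')]
                  exact mul_le_mul_of_nonneg_left (hVN s') (hP0 s a ha s')
              _ = N := by rw [← Finset.sum_mul, hP1 s a ha, one_mul]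
  have hNfix : N ≤ Rmax + β * N := by
    apply Finset.sup'_le
    intro s _
    exact Finset.sup'_le _ _ fun a ha => hNbound s a ha
  have hNval : N ≤ Rmax / (1 - β) := by
    rw [le_div_iff₀ hβ1']
    nlinarith
  have hNnn : 0 ≤ N := by
    obtain ⟨s⟩ := (inferInstance : Nonempty S)
    obtain ⟨a, ha⟩ := hAct s
    exact le_trans (abs_nonneg _) (hNle s a ha)
  -- main pointwise bound
  have hmain : ∀ s a, a ∈ Act s → |QM s a - QM' s a| ≤ εR + β * εP * N + β * D := by
    intro s a ha
    conv_lhs => rw [← hQM, ← hQM']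
    unfold bellman
    have key : (Rhat s a + β * ∑ s' : S, Phat s a s' * (Act s').sup' (hAct s') (fun a' => QM s' a'))
        - (R s a + β * ∑ s' : S, P s a s' * (Act s').sup' (hAct s') (fun a' => QM' s' a'))
        = (Rhat s a - R s a)
          + β * ∑ s' : S, (Phat s a s' - P s a s') * (Act s').sup' (hAct s') (fun a' => QM' s' a')
          + β * ∑ s' : S, Phat s a s' * ((Act s').sup' (hAct s') (fun a' => QM s' a')
              - (Act s').sup' (hAct s') (fun a' => QM' s' a')) := by
      have hsum : (∑ s' : S, Phat s a s' * (Act s').sup' (hAct s') (fun a' => QM s' a'))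
          - ∑ s' : S, P s a s' * (Act s').sup' (hAct s') (fun a' => QM' s' a')
          = (∑ s' : S, (Phat s a s' - P s a s') * (Act s').sup' (hAct s') (fun a' => QM' s' a'))
            + ∑ s' : S, Phat s a s' * ((Act s').sup' (hAct s') (fun a' => QM s' a')
              - (Act s').sup' (hAct s') (fun a' => QM' s' a')) := by
        rw [← Finset.sum_add_distrib, ← Finset.sum_sub_distrib]
        apply Finset.sum_congr rfl
        intro s' _
        ring
      linear_combination β * hsum
    rw [key]
    calc |(Rhat s a - R s a)
          + β * ∑ s' : S, (Phat s a s' - P s a s') * (Act s').sup' (hAct s') (fun a' => QM' s' a')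
          + β * ∑ s' : S, Phat s a s' * ((Act s').sup' (hAct s') (fun a' => QM s' a')
              - (Act s').sup' (hAct s') (fun a' => QM' s' a'))|
        ≤ |Rhat s a - R s a|
          + β * |∑ s' : S, (Phat s a s' - P s a s') * (Act s').sup' (hAct s') (fun a' => QM' s' a')|
          + β * |∑ s' : S, Phat s a s' * ((Act s').sup' (hAct s') (fun a' => QM s' a')
              - (Act s').sup' (hAct s') (fun a' => QM' s' a'))| := by
          have h1 := abs_add_le ((Rhat s a - R s a)
            + β * ∑ s' : S, (Phat s a s' - P s a s') * (Act s').sup' (hAct s') (fun a' => QM' s' a'))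
            (β * ∑ s' : S, Phat s a s' * ((Act s').sup' (hAct s') (fun a' => QM s' a')
              - (Act s').sup' (hAct s') (fun a' => QM' s' a')))
          have h2 := abs_add_le (Rhat s a - R s a)
            (β * ∑ s' : S, (Phat s a s' - P s a s') * (Act s').sup' (hAct s') (fun a' => QM' s' a'))
          simp only [abs_mul, abs_of_pos hβ0] at h1 h2
          linarith
      _ ≤ εR + β * (εP * N) + β * D := by
          gcongr
          · exact hR s a ha
          · calc |∑ s' : S, (Phat s a s' - P s a s') * (Act s').sup' (hAct s') (fun a' => QM' s' a')|
                ≤ ∑ s' : S, |(Phat s a s' - P s a s') * (Act s').sup' (hAct s') (fun a' => QM' s' a')| :=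
                  Finset.abs_sum_le_sum_abs _ _
              _ ≤ ∑ s' : S, |Phat s a s' - P s a s'| * N := by
                  apply Finset.sum_le_sum
                  intro s' _
                  rw [abs_mul]
                  exact mul_le_mul_of_nonneg_left (hVN s') (abs_nonneg _)
              _ ≤ εP * N := by
                  rw [← Finset.sum_mul]
                  exact mul_le_mul_of_nonneg_right (hPgap s a ha) hNnn
          · calc |∑ s' : S, Phat s a s' * ((Act s').sup' (hAct s') (fun a' => QM s' a')
                  - (Act s').sup' (hAct s') (fun a' => QM' s' a'))|
                ≤ ∑ s' : S, |Phat s a s' * ((Act s').sup' (hAct s') (fun a' => QM s' a')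
                  - (Act s').sup' (hAct s') (fun a' => QM' s' a'))| :=
                  Finset.abs_sum_le_sum_abs _ _
              _ ≤ ∑ s' : S, Phat s a s' * D := by
                  apply Finset.sum_le_sum
                  intro s' _
                  rw [abs_mul, abs_of_nonneg (hPhat0 s a ha s')]
                  exact mul_le_mul_of_nonneg_left (hVgap s') (hPhat0 s a ha s')
              _ = D := by rw [← Finset.sum_mul, hPhat1 s a ha, one_mul]
      _ = εR + β * εP * N + β * D := by ring
  have hDfix : D ≤ εR + β * εP * N + β * D := by
    apply Finset.sup'_le
    intro s _
    exact Finset.sup'_le _ _ fun a ha => hmain s a ha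
  have hεPnn : 0 ≤ εP := by
    obtain ⟨s⟩ := (inferInstance : Nonempty S)
    obtain ⟨a, ha⟩ := hAct s
    exact le_trans (Finset.sum_nonneg fun s' _ => abs_nonneg _) (hPgap s a ha)
  have hDval : D * (1 - β) ≤ εR + β * εP * (Rmax / (1 - β)) := by
    nlinarith [mul_le_mul_of_nonneg_left hNval (mul_nonneg hβ0.le hεPnn)]
  have key : D * (1 - β) ^ 2 ≤ εR * (1 - β) + β * Rmax * εP := by
    have h := mul_le_mul_of_nonneg_right hDval hβ1'.le
    have h2 : β * εP * (Rmax / (1 - β)) * (1 - β) = β * εP * Rmax := by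
      field_simp
    nlinarith
  calc D = D * (1 - β) ^ 2 / (1 - β) ^ 2 := by field_simp
    _ ≤ (εR * (1 - β) + β * Rmax * εP) / (1 - β) ^ 2 := by gcongr
    _ = εR / (1 - β) + β * Rmax * εP / (1 - β) ^ 2 := by
        field_simp
end

section
/- Let M = (S, A, P̂, R̂, β) and M′ = (S, A, P, R, β) be two finite MDPs sharing the same state space S, action sets A(s), and discount factor β ∈ (0,1), with Bellman optimality operators T_M and T_{M′}. Suppose that for all s ∈ S and a ∈ A(s): |R̂(s,a) − R(s,a)| ≤ ε_R and Σ_{s′∈S} |P̂(s′|s,a) − P(s′|s,a)| ≤ ε_P. Then for every function Q on the state-action pairs, ‖T_M Q − T_{M′} Q‖_∞ ≤ ε_R + β·ε_P·‖Q‖_∞. -/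
open Finset

/--
Let `M = (S, A, P̂, R̂, β)` and `M' = (S, A, P, R, β)` be two finite MDPs
sharing the same state space, action sets and discount factor `β ∈ (0,1)`, with Bellman
optimality operators `T_M` and `T_{M'}`.  If for all `s ∈ S`, `a ∈ A(s)`:
`|R̂(s,a) − R(s,a)| ≤ ε_R` and `Σ_{s'} |P̂(s'|s,a) − P(s'|s,a)| ≤ ε_P`, then for every `Q`,
`‖T_M Q − T_{M'} Q‖_∞ ≤ ε_R + β·ε_P·‖Q‖_∞`.
-/
theorem bellman_operators_gap {S A : Type*} [Fintype S] [Nonempty S]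
    (Act : S → Finset A) (hAct : ∀ s, (Act s).Nonempty)
    (Phat P : S → A → S → ℝ) (Rhat R : S → A → ℝ) (β : ℝ)
    (hβ0 : 0 < β) (hβ1 : β < 1)
    (hPhat0 : ∀ s a, a ∈ Act s → ∀ s', 0 ≤ Phat s a s')
    (hPhat1 : ∀ s a, a ∈ Act s → ∑ s' : S, Phat s a s' = 1)
    (hP0 : ∀ s a, a ∈ Act s → ∀ s', 0 ≤ P s a s')
    (hP1 : ∀ s a, a ∈ Act s → ∑ s' : S, P s a s' = 1)
    (εR εP : ℝ)
    (hR : ∀ s a, a ∈ Act s → |Rhat s a - R s a| ≤ εR)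
    (hPgap : ∀ s a, a ∈ Act s → ∑ s' : S, |Phat s a s' - P s a s'| ≤ εP)
    (Q : S → A → ℝ) :
    supNorm Act hAct
        (fun s a => bellman Act hAct Phat Rhat β Q s a - bellman Act hAct P R β Q s a) ≤
      εR + β * εP * supNorm Act hAct Q := by
  have hQnn : 0 ≤ supNorm Act hAct Q := by
    obtain ⟨s⟩ := ‹Nonempty S›
    obtain ⟨a, ha⟩ := hAct s
    have : |Q s a| ≤ supNorm Act hAct Q := by
      refine le_trans ?_ (Finset.le_sup' _ (Finset.mem_univ s))
      exact Finset.le_sup' (fun a' => |Q s a'|) ha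
    exact le_trans (abs_nonneg _) this
  have hV : ∀ s', |(Act s').sup' (hAct s') (fun a' => Q s' a')| ≤ supNorm Act hAct Q := by
    intro s'
    obtain ⟨a', ha', heq⟩ := Finset.exists_mem_eq_sup' (hAct s') (fun a' => Q s' a')
    rw [heq]
    refine le_trans ?_ (Finset.le_sup' _ (Finset.mem_univ s'))
    exact Finset.le_sup' (fun a => |Q s' a|) ha'
  apply Finset.sup'_le
  intro s _
  apply Finset.sup'_le
  intro a ha
  set V : S → ℝ := fun s' => (Act s').sup' (hAct s') (fun a' => Q s' a') with hVdef
  have key : bellman Act hAct Phat Rhat β Q s a - bellman Act hAct P R β Q s a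
      = (Rhat s a - R s a) + β * ∑ s' : S, (Phat s a s' - P s a s') * V s' := by
    simp only [bellman, hVdef, sub_mul, Finset.sum_sub_distrib]
    ring
  show |bellman Act hAct Phat Rhat β Q s a - bellman Act hAct P R β Q s a| ≤ _
  rw [key]
  calc |(Rhat s a - R s a) + β * ∑ s' : S, (Phat s a s' - P s a s') * V s'|
      ≤ |Rhat s a - R s a| + |β * ∑ s' : S, (Phat s a s' - P s a s') * V s'| := abs_add_le _ _
    _ ≤ εR + β * εP * supNorm Act hAct Q := by
        refine add_le_add (hR s a ha) ?_
        rw [abs_mul, abs_of_pos hβ0, mul_assoc]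
        refine mul_le_mul_of_nonneg_left ?_ hβ0.le
        calc |∑ s' : S, (Phat s a s' - P s a s') * V s'|
            ≤ ∑ s' : S, |(Phat s a s' - P s a s') * V s'| := Finset.abs_sum_le_sum_abs _ _
          _ ≤ ∑ s' : S, |Phat s a s' - P s a s'| * supNorm Act hAct Q := by
              refine Finset.sum_le_sum fun s' _ => ?_
              rw [abs_mul]
              exact mul_le_mul_of_nonneg_left (hV s') (abs_nonneg _)
          _ = (∑ s' : S, |Phat s a s' - P s a s'|) * supNorm Act hAct Q := by
              rw [Finset.sum_mul]
          _ ≤ εP * supNorm Act hAct Q :=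
              mul_le_mul_of_nonneg_right (hPgap s a ha) hQnn
end
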